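/- The algebraizability translation equations hold in O3: for all x, y in O3, the equation x = y holds if and only if both x ⇒ y and y ⇒ x evaluate to designated values satisfying (x⇒y) = (x⇒y) ⇒ (x⇒y) and (y⇒x) = (y⇒x) ⇒ (y⇒x). -/
import Mathlib


inductive O3 : Type | zero | half | one
deriving DecidableEq

open O3

def oneg : O3 → O3
  | zero => one | one => zero | half => half

def oand : O3 → O3 → O3
  | half, half => half | half, one => one | half, zero => zero
  | one, half => one | one, one => one | one, zero => zero
  | zero, _ => zero

def oor : O3 → O3 → O3
  | half, half => half | half, one => one | half, zero => zero
  | one, _ => one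
  | zero, half => zero | zero, one => one | zero, zero => zero

def oimp : O3 → O3 → O3
  | half, y => y | one, y => y | zero, _ => half

/-- designated values -/
def desig (x : O3) : Prop := x = half ∨ x = one

/-- Kleene meet: minimum w.r.t. 0 < ½ < 1 -/
def kmeet : O3 → O3 → O3
  | zero, _ => zero | _, zero => zero
  | half, _ => half | _, half => half
  | one, one => one

/-- Kleene join: maximum w.r.t. 0 < ½ < 1 -/
def kjoin : O3 → O3 → O3
  | one, _ => one | _, one => one
  | half, _ => half | _, half => half
  | zero, zero => zero

/-- material implication ¬x ∨ y -/
def bimp (x y : O3) : O3 := oor (oneg x) y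

theorem algebraizability_equations :
    ∀ x y : O3, x = y ↔
      (bimp x y = bimp (bimp x y) (bimp x y) ∧
       bimp y x = bimp (bimp y x) (bimp y x) ∧
       desig (bimp x y) ∧ desig (bimp y x)) := by
  intro x y
  cases x <;> cases y <;> simp [bimp, oneg, oor, desig]
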